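/- arXiv:2412.17257 — 4 statements merged into one kernel-verified Lean document; each statement's English description precedes it below -/
import Mathlib

section
/- Let A ∈ ℝ_+^{m×n} and H ∈ ℝ_+^{p×n} be nonnegative matrices with every row of U ∈ ℝ_+^{n×p} nonzero, and suppose v ∈ ℝ_+^n with all v_i > 0. If for every d ∈ ℝ_+^p the policy y(d) = min{v, Ud} satisfies A·y(d) ≤ x and H·y(d) ≤ d, then Av ≤ x and HU ≤ I. -/
/-- Converse of the constraints-reduction proposition: if the truncated linear policy
`y(d) = min{v, Ud}` is feasible for every `d ≥ 0`, with nonnegative data, nonzero rows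
of `U`, and positive thresholds `v`, then `Av ≤ x` and `HU ≤ I`. -/
theorem tldr_feasible_necessary {m n p : ℕ}
    (A : Matrix (Fin m) (Fin n) ℝ) (H : Matrix (Fin p) (Fin n) ℝ)
    (x : Fin m → ℝ) (v : Fin n → ℝ) (U : Matrix (Fin n) (Fin p) ℝ)
    (hA : ∀ i j, 0 ≤ A i j) (hH : ∀ i j, 0 ≤ H i j)
    (hU : ∀ i j, 0 ≤ U i j) (hUrow : ∀ i, (fun j => U i j) ≠ 0)
    (hv : ∀ i, 0 < v i)
    (hfeas : ∀ d : Fin p → ℝ, 0 ≤ d →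
      A.mulVec (fun i => min (v i) (U.mulVec d i)) ≤ x ∧
      H.mulVec (fun i => min (v i) (U.mulVec d i)) ≤ d) :
    A.mulVec v ≤ x ∧
    ∀ i j, (H * U) i j ≤ (1 : Matrix (Fin p) (Fin p) ℝ) i j := by
  -- row sums of U are positive (when Fin p is nonempty this follows; derive it in general)
  have hs : ∀ i : Fin n, 0 < ∑ j, U i j := by
    intro i
    have hne : ∃ j, U i j ≠ 0 := by
      by_contra h
      push_neg at h
      exact hUrow i (funext fun j => h j)
    obtain ⟨j0, hj0⟩ := hne
    exact Finset.sum_pos' (fun j _ => hU i j) ⟨j0, Finset.mem_univ _, lt_of_le_of_ne (hU i j0) (Ne.symm hj0)⟩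
  constructor
  · -- Av ≤ x : take d large
    rcases isEmpty_or_nonempty (Fin n) with hn | hn
    · have h0 := (hfeas 0 (le_refl _)).1
      have : (fun i => min (v i) (U.mulVec 0 i)) = v := funext fun i => (hn.false i).elim
      rwa [this] at h0
    · set c : ℝ := Finset.univ.sup' (Finset.univ_nonempty) (fun i => v i / (∑ j, U i j)) with hc
      have hcge : ∀ i : Fin n, v i / (∑ j, U i j) ≤ c :=
        fun i => Finset.le_sup' (fun i => v i / (∑ j, U i j)) (Finset.mem_univ i)
      have hcpos : 0 < c := by
        obtain ⟨i0⟩ := hn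
        exact lt_of_lt_of_le (div_pos (hv i0) (hs i0)) (hcge i0)
      set d : Fin p → ℝ := fun _ => c with hd
      have hdpos : (0 : Fin p → ℝ) ≤ d := fun _ => le_of_lt hcpos
      have hUd : ∀ i, v i ≤ U.mulVec d i := by
        intro i
        have heq : U.mulVec d i = (∑ j, U i j) * c := by
          simp [Matrix.mulVec, dotProduct, hd, Finset.sum_mul]
        rw [heq]
        have h := hcge i
        rw [div_le_iff₀ (hs i)] at h
        linarith [h]
      have h1 := (hfeas d hdpos).1
      have : (fun i => min (v i) (U.mulVec d i)) = v :=
        funext fun i => min_eq_left (hUd i)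
      rwa [this] at h1
  · -- HU ≤ I : take d a small multiple of e_b
    intro a b
    rcases isEmpty_or_nonempty (Fin n) with hn | hn
    · simp [Matrix.mul_apply, Matrix.one_apply]
      positivity
    · set t : ℝ := Finset.univ.inf' (Finset.univ_nonempty) (fun i => v i / (U i b + 1)) with ht
      have htle : ∀ i : Fin n, t ≤ v i / (U i b + 1) :=
        fun i => Finset.inf'_le _ (Finset.mem_univ i)
      have htpos : 0 < t := by
        rw [ht, Finset.lt_inf'_iff]
        intro i _
        exact div_pos (hv i) (by linarith [hU i b])
      set d : Fin p → ℝ := fun k => if k = b then t else 0 with hd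
      have hdpos : (0 : Fin p → ℝ) ≤ d := by
        intro k
        simp only [hd]
        split <;> simp [le_of_lt htpos]
      have hUd : ∀ i, U.mulVec d i = U i b * t := by
        intro i
        simp [Matrix.mulVec, dotProduct, hd, mul_ite, mul_zero]
      have hmin : ∀ i, min (v i) (U.mulVec d i) = U i b * t := by
        intro i
        rw [hUd i]
        apply min_eq_right
        have h1 : U i b * t ≤ U i b * (v i / (U i b + 1)) :=
          mul_le_mul_of_nonneg_left (htle i) (hU i b)
        have h2 : U i b * (v i / (U i b + 1)) ≤ v i := by
          rw [mul_div_assoc']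
          rw [div_le_iff₀ (by linarith [hU i b])]
          nlinarith [hv i, hU i b]
        linarith
      have h2 := (hfeas d hdpos).2 a
      have hlhs : H.mulVec (fun i => min (v i) (U.mulVec d i)) a = t * (H * U) a b := by
        have hfun : (fun i => min (v i) (U.mulVec d i)) = fun i => U i b * t :=
          funext hmin
        rw [hfun]
        simp only [Matrix.mulVec, dotProduct, Matrix.mul_apply]
        rw [Finset.mul_sum]
        apply Finset.sum_congr rfl
        intro i _
        ring
      rw [hlhs] at h2
      have hrhs : d a = t * (1 : Matrix (Fin p) (Fin p) ℝ) a b := by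
        simp only [hd, Matrix.one_apply, mul_ite, mul_one, mul_zero]
      rw [hrhs] at h2
      exact le_of_mul_le_mul_left h2 htpos
end

section
/- Let Z be a real-valued random variable with finite mean m and finite variance σ². Then E[max{0, Z}] ≤ (√(σ² + m²) + m)/2. -/
/-!
Writing `max 0 Z = (Z + |Z|) / 2` gives `E[max 0 Z] = (m + E|Z|) / 2`, and `E|Z| ≤ √E[Z²]`
because `Var |Z| = E[Z²] - (E|Z|)² ≥ 0`; finally `E[Z²] = σ² + m²`.
-/

open MeasureTheory ProbabilityTheory

lemma max_zero_eq_add_abs_div_two (x : ℝ) : max 0 x = (x + |x|) / 2 := by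
  rcases le_total 0 x with hx | hx
  · rw [max_eq_right hx, abs_of_nonneg hx]; ring
  · rw [max_eq_left hx, abs_of_nonpos hx]; ring

section

variable {Ω : Type*} [MeasurableSpace Ω] {μ : Measure Ω} {Z : Ω → ℝ}

lemma integral_max_zero_eq (hZ : Integrable Z μ) :
    ∫ ω, max 0 (Z ω) ∂μ = ((∫ ω, Z ω ∂μ) + ∫ ω, |Z ω| ∂μ) / 2 := by
  simp_rw [max_zero_eq_add_abs_div_two]
  rw [integral_div, integral_add hZ hZ.abs]

lemma integral_sq_eq_variance_add_sq [IsProbabilityMeasure μ] (hZ : MemLp Z 2 μ) :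
    ∫ ω, Z ω ^ 2 ∂μ = variance Z μ + (∫ ω, Z ω ∂μ) ^ 2 := by
  rw [variance_eq_sub hZ]
  simp only [Pi.pow_apply, sub_add_cancel]

lemma sq_integral_abs_le_integral_sq [IsProbabilityMeasure μ] (hZ : MemLp Z 2 μ) :
    (∫ ω, |Z ω| ∂μ) ^ 2 ≤ ∫ ω, Z ω ^ 2 ∂μ := by
  have h : ∫ ω, |Z ω| ^ 2 ∂μ = _ := integral_sq_eq_variance_add_sq hZ.abs
  simp only [sq_abs] at h
  linarith [variance_nonneg (fun ω => |Z ω|) μ]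

lemma integral_abs_le_sqrt_integral_sq [IsProbabilityMeasure μ] (hZ : MemLp Z 2 μ) :
    ∫ ω, |Z ω| ∂μ ≤ Real.sqrt (∫ ω, Z ω ^ 2 ∂μ) :=
  Real.le_sqrt_of_sq_le (sq_integral_abs_le_integral_sq hZ)

end

/-- Gallego–Moon bound: for a square-integrable random variable `Z` with mean `m`
and variance `σ²`, `E[max{0,Z}] ≤ (√(σ² + m²) + m)/2`. -/
theorem gallego_moon_bound {Ω : Type*} [MeasurableSpace Ω]
    (μ : Measure Ω) [IsProbabilityMeasure μ]
    (Z : Ω → ℝ) (hZ : MemLp Z 2 μ) (m : ℝ) (hm : ∫ ω, Z ω ∂μ = m) :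
    ∫ ω, max 0 (Z ω) ∂μ ≤ (Real.sqrt (variance Z μ + m ^ 2) + m) / 2 := by
  subst hm
  rw [integral_max_zero_eq (hZ.integrable one_le_two), ← integral_sq_eq_variance_add_sq hZ]
  linarith [integral_abs_le_sqrt_integral_sq hZ]
end

section
/- Let P and P̂ be probability distributions on ℝ^N with finite second moments, means μ and μ̂, and covariance matrices Σ and Σ̂. If the 2-Wasserstein distance W(P, P̂) ≤ ε, then ‖μ − μ̂‖ ≤ ε and (1/2)Tr(Σ) − Tr(Σ̂) ≤ ε². -/
/-!
Take a coupling `(X, Y)` of `P` and `Q` with `E‖X - Y‖² ≤ ε²` and argue coordinatewise. For the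
means, `(E[X i - Y i])² ≤ E[(X i - Y i)²]` since a variance is nonnegative. For the covariances,
`Var[A + B] ≤ 2 Var[A] + 2 Var[B]` with `A = X i - Y i`, `B = Y i`, and `Var[A] ≤ E[A²]`, give
`Var[X i] ≤ 2 E[(X i - Y i)²] + 2 Var[Y i]`; summing over `i` bounds `Tr Σ₁ - 2 Tr Σ₂` by `2ε²`.
-/

open MeasureTheory ProbabilityTheory

section Moments

variable {Ω : Type*} [MeasurableSpace Ω] {m : Measure Ω} [IsProbabilityMeasure m]

lemma sq_integral_le_integral_sq {f : Ω → ℝ} (hf : MemLp f 2 m) :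
    (∫ ω, f ω ∂m) ^ 2 ≤ ∫ ω, f ω ^ 2 ∂m := by
  have h := variance_nonneg f m
  rw [variance_eq_sub hf] at h
  simpa [sub_nonneg] using h

lemma variance_add_le {f g : Ω → ℝ} (hf : MemLp f 2 m) (hg : MemLp g 2 m) :
    Var[f + g; m] ≤ 2 * Var[f; m] + 2 * Var[g; m] := by
  have h := variance_nonneg (f - g) m
  rw [variance_sub hf hg] at h
  rw [variance_add hf hg]
  linarith

lemma variance_le_two_mul_integral_sq_sub_add {f g : Ω → ℝ} (hf : MemLp f 2 m)
    (hg : MemLp g 2 m) :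
    Var[f; m] ≤ 2 * ∫ ω, (f ω - g ω) ^ 2 ∂m + 2 * Var[g; m] := by
  have hsplit : Var[f; m] ≤ 2 * Var[f - g; m] + 2 * Var[g; m] := by
    simpa using variance_add_le (hf.sub hg) hg
  have hdiff : Var[f - g; m] ≤ ∫ ω, (f ω - g ω) ^ 2 ∂m :=
    variance_le_expectation_sq (hf.sub hg).aestronglyMeasurable
  linarith

variable {ι : Type*} [Fintype ι] {X Y : Ω → ι → ℝ}

lemma sum_sq_integral_sub_le (hX : MemLp X 2 m) (hY : MemLp Y 2 m) :
    ∑ i, (∫ ω, X ω i ∂m - ∫ ω, Y ω i ∂m) ^ 2 ≤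
      ∫ ω, ∑ i, (X ω i - Y ω i) ^ 2 ∂m := by
  have hXY (i : ι) : MemLp (fun ω ↦ X ω i - Y ω i) 2 m := (hX.eval i).sub (hY.eval i)
  rw [integral_finsetSum _ fun i _ ↦ (hXY i).integrable_sq]
  refine Finset.sum_le_sum fun i _ ↦ ?_
  rw [← integral_sub ((hX.eval i).integrable one_le_two) ((hY.eval i).integrable one_le_two)]
  exact sq_integral_le_integral_sq (hXY i)

lemma sum_variance_le (hX : MemLp X 2 m) (hY : MemLp Y 2 m) :
    ∑ i, Var[fun ω ↦ X ω i; m] ≤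
      2 * ∫ ω, ∑ i, (X ω i - Y ω i) ^ 2 ∂m + 2 * ∑ i, Var[fun ω ↦ Y ω i; m] := by
  have hXY (i : ι) : MemLp (fun ω ↦ X ω i - Y ω i) 2 m := (hX.eval i).sub (hY.eval i)
  rw [integral_finsetSum _ fun i _ ↦ (hXY i).integrable_sq, Finset.mul_sum, Finset.mul_sum,
    ← Finset.sum_add_distrib]
  exact Finset.sum_le_sum fun i _ ↦
    variance_le_two_mul_integral_sq_sub_add (hX.eval i) (hY.eval i)

end Moments

lemma Matrix.trace_eq_sum_variance {ι : Type*} [Fintype ι] {P : Measure (ι → ℝ)}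
    (S : Matrix ι ι ℝ) (μ : ι → ℝ) (hμ : ∀ i, μ i = ∫ d, d i ∂P)
    (hS : ∀ i j, S i j = ∫ d, (d i - μ i) * (d j - μ j) ∂P) :
    S.trace = ∑ i, Var[fun d ↦ d i; P] := by
  refine Finset.sum_congr rfl fun i _ ↦ ?_
  rw [Matrix.diag_apply, hS, variance_eq_integral (measurable_pi_apply i).aemeasurable, ← hμ]
  simp only [sq]

theorem wasserstein_moment_bounds_general {N : ℕ}
    (P Q : Measure (Fin N → ℝ))
    (hP2 : MemLp (fun d => d) 2 P) (hQ2 : MemLp (fun d => d) 2 Q)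
    (μ ν : Fin N → ℝ)
    (hμ : ∀ i, μ i = ∫ d, d i ∂P) (hν : ∀ i, ν i = ∫ d, d i ∂Q)
    (S1 S2 : Matrix (Fin N) (Fin N) ℝ)
    (hS1 : ∀ i j, S1 i j = ∫ d, (d i - μ i) * (d j - μ j) ∂P)
    (hS2 : ∀ i j, S2 i j = ∫ d, (d i - ν i) * (d j - ν j) ∂Q)
    (ε : ℝ) (hε : 0 ≤ ε)
    (hW : ∃ π : Measure ((Fin N → ℝ) × (Fin N → ℝ)), IsProbabilityMeasure π ∧
      π.map Prod.fst = P ∧ π.map Prod.snd = Q ∧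
      ∫ dd, (∑ i, (dd.1 i - dd.2 i) ^ 2) ∂π ≤ ε ^ 2) :
    Real.sqrt (∑ i, (μ i - ν i) ^ 2) ≤ ε ∧
    (1 / 2) * S1.trace - S2.trace ≤ ε ^ 2 := by
  obtain ⟨π, hπ, rfl, rfl, hcost⟩ := hW
  have hX : MemLp Prod.fst 2 π :=
    (memLp_map_measure_iff aestronglyMeasurable_id measurable_fst.aemeasurable).1 hP2
  have hY : MemLp Prod.snd 2 π :=
    (memLp_map_measure_iff aestronglyMeasurable_id measurable_snd.aemeasurable).1 hQ2
  have hmean {g : _ → Fin N → ℝ} (hg : Measurable g) (i : Fin N) :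
      ∫ d, d i ∂π.map g = ∫ x, g x i ∂π :=
    integral_map hg.aemeasurable (measurable_pi_apply i).aestronglyMeasurable
  have hvar {g : _ → Fin N → ℝ} (hg : Measurable g) (i : Fin N) :
      Var[fun d ↦ d i; π.map g] = Var[fun x ↦ g x i; π] :=
    variance_map (measurable_pi_apply i).aemeasurable hg.aemeasurable
  refine ⟨?_, ?_⟩
  · refine (Real.sqrt_le_sqrt ?_).trans_eq (Real.sqrt_sq hε)
    simp_rw [hμ, hν, hmean measurable_fst, hmean measurable_snd]
    exact (sum_sq_integral_sub_le hX hY).trans hcost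
  · rw [S1.trace_eq_sum_variance μ hμ hS1, S2.trace_eq_sum_variance ν hν hS2]
    simp_rw [hvar measurable_fst, hvar measurable_snd]
    linarith [sum_variance_le hX hY]

/-- If the 2-Wasserstein distance between `P` and `Q` is at most `ε` (witnessed by a
coupling with second moment cost at most `ε²`), then the means satisfy `‖μ − ν‖ ≤ ε`
and the covariance traces satisfy `(1/2)Tr(Σ₁) − Tr(Σ₂) ≤ ε²`. -/
theorem wasserstein_moment_bounds {N : ℕ}
    (P Q : Measure (Fin N → ℝ)) [IsProbabilityMeasure P] [IsProbabilityMeasure Q]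
    (hP2 : MemLp (fun d => d) 2 P) (hQ2 : MemLp (fun d => d) 2 Q)
    (μ ν : Fin N → ℝ)
    (hμ : ∀ i, μ i = ∫ d, d i ∂P) (hν : ∀ i, ν i = ∫ d, d i ∂Q)
    (S1 S2 : Matrix (Fin N) (Fin N) ℝ)
    (hS1 : ∀ i j, S1 i j = ∫ d, (d i - μ i) * (d j - μ j) ∂P)
    (hS2 : ∀ i j, S2 i j = ∫ d, (d i - ν i) * (d j - ν j) ∂Q)
    (ε : ℝ) (hε : 0 ≤ ε)
    (hW : ∃ π : Measure ((Fin N → ℝ) × (Fin N → ℝ)), IsProbabilityMeasure π ∧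
      π.map Prod.fst = P ∧ π.map Prod.snd = Q ∧
      ∫ dd, (∑ i, (dd.1 i - dd.2 i) ^ 2) ∂π ≤ ε ^ 2) :
    Real.sqrt (∑ i, (μ i - ν i) ^ 2) ≤ ε ∧
    (1 / 2) * S1.trace - S2.trace ≤ ε ^ 2 :=
  wasserstein_moment_bounds_general P Q hP2 hQ2 μ ν hμ hν S1 S2 hS1 hS2 ε hε hW
end

section
/- For the Conditional Value-at-Risk at level β ∈ (0,1), CVaR_β(Z) = inf_t { t + (1/β)·E[max{Z − t, 0}] }, the standard risk coefficient satisfies sup{ CVaR_β(Z) : E[Z]=0, Var(Z)=1 } = √((1−β)/β). -/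
/-!
Every zero-mean, unit-variance law `P` and every `t`, `a > 0` satisfy
`E[(Z - t)⁺] ≤ E[(Z - t + a)²] / (4a) = (1 + (a - t)²) / (4a)`, since the parabola
`u ↦ (u + a)² / (4a)` majorises `u⁺` and touches it at `u = ±a`. Writing `β = 1 / (1 + r²)` and
choosing `t ± a` to be `r` and `-1/r` makes the Rockafellar–Uryasev objective equal to `r`.
The law with mass `β` at `r` and `1 - β` at `-1/r` is standardised, and its CVaR is exactly its
top atom `r`, so the supremum is attained.
-/

open MeasureTheory ProbabilityTheory unitInterval

noncomputable def cvarObjective (β : ℝ) (P : Measure ℝ) (t : ℝ) : ℝ :=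
  t + β⁻¹ * ∫ z, max (z - t) 0 ∂P

noncomputable def cvar (β : ℝ) (P : Measure ℝ) : ℝ :=
  ⨅ t, cvarObjective β P t

section Objective

variable {β : ℝ} {P : Measure ℝ} [IsProbabilityMeasure P]

lemma integral_sub_const_le_integral_max (hP : Integrable id P) (t : ℝ) :
    ∫ z, z ∂P - t ≤ ∫ z, max (z - t) 0 ∂P :=
  calc ∫ z, z ∂P - t = ∫ z, (z - t) ∂P := by
        rw [integral_sub (f := fun z ↦ z) hP (integrable_const t)]; simp
    _ ≤ ∫ z, max (z - t) 0 ∂P :=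
        integral_mono (hP.sub (integrable_const t)) (hP.sub (integrable_const t)).pos_part
          fun z ↦ le_max_left _ _

lemma integral_id_le_cvarObjective (hβ0 : 0 < β) (hβ1 : β ≤ 1) (hP : Integrable id P)
    (t : ℝ) : ∫ z, z ∂P ≤ cvarObjective β P t := by
  have hpos : 0 ≤ ∫ z, max (z - t) 0 ∂P := integral_nonneg fun z ↦ le_max_right _ _
  calc ∫ z, z ∂P = t + (∫ z, z ∂P - t) := by ring
    _ ≤ t + ∫ z, max (z - t) 0 ∂P := by gcongr; exact integral_sub_const_le_integral_max hP t
    _ ≤ cvarObjective β P t := by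
        unfold cvarObjective
        gcongr
        exact le_mul_of_one_le_left hpos ((one_le_inv₀ hβ0).2 hβ1)

lemma bddBelow_range_cvarObjective (hβ0 : 0 < β) (hβ1 : β ≤ 1) (hP : Integrable id P) :
    BddBelow (Set.range (cvarObjective β P)) :=
  ⟨_, Set.forall_mem_range.2 (integral_id_le_cvarObjective hβ0 hβ1 hP)⟩

lemma cvar_le_cvarObjective (hβ0 : 0 < β) (hβ1 : β ≤ 1) (hP : Integrable id P) (t : ℝ) :
    cvar β P ≤ cvarObjective β P t :=
  ciInf_le (bddBelow_range_cvarObjective hβ0 hβ1 hP) t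

end Objective

lemma max_zero_le_sq_add_div {a : ℝ} (ha : 0 < a) (u : ℝ) :
    max u 0 ≤ (u + a) ^ 2 / (4 * a) := by
  rw [le_div_iff₀ (by positivity)]
  rcases le_total u 0 with hu | hu
  · rw [max_eq_right hu, zero_mul]; positivity
  · rw [max_eq_left hu]; nlinarith [sq_nonneg (u - a)]

section SecondMoment

variable {P : Measure ℝ} [IsProbabilityMeasure P]

lemma integral_add_const_sq (hP : MemLp id 2 P) (c : ℝ) :
    ∫ z, (z + c) ^ 2 ∂P = ∫ z, z ^ 2 ∂P + 2 * c * ∫ z, z ∂P + c ^ 2 := by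
  have h1 : Integrable (fun z : ℝ ↦ z) P := hP.integrable one_le_two
  have h2 : Integrable (fun z : ℝ ↦ z ^ 2) P := hP.integrable_sq
  have h2c : Integrable (fun z : ℝ ↦ z ^ 2 + 2 * c * z) P := h2.add (h1.const_mul _)
  calc ∫ z, (z + c) ^ 2 ∂P = ∫ z, (z ^ 2 + 2 * c * z + c ^ 2) ∂P := by congr 1; ext z; ring
    _ = _ := by
      rw [integral_add h2c (integrable_const _), integral_add h2 (h1.const_mul _),
        integral_const_mul]
      simp

lemma integral_max_sub_le (hP : MemLp id 2 P) {a : ℝ} (ha : 0 < a) (t : ℝ) :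
    ∫ z, max (z - t) 0 ∂P ≤ (∫ z, z ^ 2 ∂P + 2 * (a - t) * ∫ z, z ∂P + (a - t) ^ 2) / (4 * a) := by
  have h1 : Integrable (fun z : ℝ ↦ z) P := hP.integrable one_le_two
  have hquad : Integrable (fun z : ℝ ↦ (z + (a - t)) ^ 2) P :=
    (hP.add (memLp_const (a - t))).integrable_sq
  calc ∫ z, max (z - t) 0 ∂P ≤ ∫ z, (z + (a - t)) ^ 2 / (4 * a) ∂P :=
        integral_mono (h1.sub (integrable_const t)).pos_part (hquad.div_const _) fun z ↦ by
          simpa [sub_add_eq_add_sub, add_sub_assoc] using max_zero_le_sq_add_div ha (z - t)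
    _ = _ := by rw [integral_div, integral_add_const_sq hP]

theorem cvar_le_of_integral_eq_zero_of_integral_sq_eq_one (hP : MemLp id 2 P)
    (hmean : ∫ z, z ∂P = 0) (hvar : ∫ z, z ^ 2 ∂P = 1) {r : ℝ} (hr : 0 < r) :
    cvar (1 + r ^ 2)⁻¹ P ≤ r := by
  have hβ1 : (1 + r ^ 2)⁻¹ ≤ 1 := inv_le_one_of_one_le₀ (by nlinarith)
  set t := (r - r⁻¹) / 2
  set a := (r + r⁻¹) / 2
  have ha : 0 < a := by positivity
  calc cvar (1 + r ^ 2)⁻¹ P ≤ cvarObjective (1 + r ^ 2)⁻¹ P t :=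
        cvar_le_cvarObjective (by positivity) hβ1 (hP.integrable one_le_two) t
    _ ≤ t + (1 + r ^ 2) * ((1 + (a - t) ^ 2) / (4 * a)) := by
        have := integral_max_sub_le hP ha t
        rw [hmean, hvar] at this
        unfold cvarObjective
        rw [inv_inv]
        gcongr
        simpa using this
    _ = r := by simp only [t, a]; field_simp; ring

end SecondMoment

lemma cvar_bernoulliMeasure {x y : ℝ} (hyx : y ≤ x) {p : I} (hp : 0 < (p : ℝ)) :
    cvar p Ber(x, y, p) = x := by
  have hobj : ∀ t, cvarObjective p Ber(x, y, p) t =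
      t + max (x - t) 0 + (p : ℝ)⁻¹ * (1 - p) * max (y - t) 0 := by
    intro t
    rw [cvarObjective, integral_bernoulliMeasure, smul_eq_mul, smul_eq_mul]
    field_simp
    ring
  have hge : ∀ t, x ≤ cvarObjective p Ber(x, y, p) t := by
    intro t
    have : 0 ≤ (p : ℝ)⁻¹ * (1 - p) * max (y - t) 0 :=
      mul_nonneg (mul_nonneg (inv_nonneg.2 hp.le) (by simpa using p.2.2)) (le_max_right _ _)
    rw [hobj]
    linarith [le_max_left (x - t) 0]
  refine le_antisymm ((ciInf_le ⟨x, Set.forall_mem_range.2 hge⟩ x).trans_eq ?_) (le_ciInf hge)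
  rw [hobj, sub_self, max_self, max_eq_right (sub_nonpos.2 hyx)]
  simp

lemma memLp_id_bernoulliMeasure (x y : ℝ) (p : I) : MemLp id 2 Ber(x, y, p) :=
  (memLp_two_iff_integrable_sq aestronglyMeasurable_id).2 (integrable_bernoulliMeasure x y p _)

lemma integral_bernoulliMeasure_neg_inv {r : ℝ} (hr : r ≠ 0) {p : I}
    (hp : (p : ℝ) = (1 + r ^ 2)⁻¹) :
    ∫ z, z ∂Ber(r, -r⁻¹, p) = 0 ∧ ∫ z, z ^ 2 ∂Ber(r, -r⁻¹, p) = 1 := by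
  simp only [integral_bernoulliMeasure, smul_eq_mul, hp]
  constructor <;> field_simp <;> ring

/-- The standard risk coefficient of Conditional Value-at-Risk at level `β ∈ (0,1)`:
the supremum of `CVaR_β(Z) = inf_t { t + (1/β)E[max{Z−t,0}] }` over square-integrable
distributions with zero mean and unit variance equals `√((1−β)/β)`. -/
theorem cvar_standard_risk_coefficient (β : ℝ) (hβ : β ∈ Set.Ioo (0 : ℝ) 1) :
    sSup {c : ℝ | ∃ P : Measure ℝ, IsProbabilityMeasure P ∧
        MemLp id 2 P ∧
        (∫ z, z ∂P) = 0 ∧ (∫ z, z ^ 2 ∂P) = 1 ∧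
        c = ⨅ t : ℝ, (t + β⁻¹ * ∫ z, max (z - t) 0 ∂P)} =
      Real.sqrt ((1 - β) / β) := by
  obtain ⟨hβ0, hβ1⟩ := hβ
  have hratio : 0 < (1 - β) / β := div_pos (sub_pos.2 hβ1) hβ0
  set r := Real.sqrt ((1 - β) / β)
  have hr : 0 < r := Real.sqrt_pos.2 hratio
  have hβr : β = (1 + r ^ 2)⁻¹ := by
    rw [Real.sq_sqrt hratio.le]; field_simp; ring
  let p : I := ⟨β, hβ0.le, hβ1.le⟩
  obtain ⟨hmean, hvar⟩ := integral_bernoulliMeasure_neg_inv hr.ne' (p := p) hβr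
  have hyx : -r⁻¹ ≤ r := (neg_nonpos.2 (inv_pos.2 hr).le).trans hr.le
  refine IsGreatest.csSup_eq ⟨⟨Ber(r, -r⁻¹, p), inferInstance, memLp_id_bernoulliMeasure _ _ _,
    hmean, hvar, (cvar_bernoulliMeasure (p := p) hyx hβ0).symm⟩, ?_⟩
  rintro _ ⟨P, hP, hL, h0, h1, rfl⟩
  rw [hβr]
  exact cvar_le_of_integral_eq_zero_of_integral_sq_eq_one hL h0 h1 hr
end
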